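/- Cauchy vorticity formula: let x(a,t) be the flow of a smooth divergence-free velocity u with x(a,0)=a, and suppose the Cauchy invariants equation ∇ᴸẋ_k × ∇ᴸx_k = ω₀ holds, where ω₀ = ∇×u₀ is the initial vorticity. Then the Eulerian vorticity ω(x(a,t),t) := (∇×u)(x(a,t),t) satisfies ω_i(x(a,t),t) = Σ_j ∂x_i/∂a_j (a,t) · ω₀_j(a) (vorticity is transported by the Jacobian matrix). -/

import Mathlib

noncomputable section

/-- Spatial/label gradient of a scalar field on `ℝ³`. -/
def grad (f : (Fin 3 → ℝ) → ℝ) (y : Fin 3 → ℝ) : Fin 3 → ℝ :=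
  fun i => fderiv ℝ f y (Pi.single i 1)

/-- The Levi-Civita symbol on `Fin 3`. -/
def eps (i j k : Fin 3) : ℝ :=
  (((j.val : ℝ) - (i.val : ℝ)) * ((k.val : ℝ) - (j.val : ℝ)) *
    ((k.val : ℝ) - (i.val : ℝ))) / 2

/-- The curl of a vector field on `ℝ³`. -/
def curl (v : (Fin 3 → ℝ) → (Fin 3 → ℝ)) (y : Fin 3 → ℝ) : Fin 3 → ℝ :=
  fun i => ∑ j, ∑ k, eps i j k * fderiv ℝ (fun z => v z k) y (Pi.single j 1)

/-! ### Auxiliary calculus lemmas -/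

section Aux

variable {E G : Type*} [NormedAddCommGroup E] [NormedSpace ℝ E]
  [NormedAddCommGroup G] [NormedSpace ℝ G]

/-- Slicing the `fderiv` in the first variable. -/
lemma fderiv_slice {F : E × ℝ → G} (hF : Differentiable ℝ F) (a : E) (t : ℝ) (v : E) :
    fderiv ℝ (fun b => F (b, t)) a v = fderiv ℝ F (a, t) (v, 0) := by
  have h : HasFDerivAt (fun b => F (b, t))
      ((fderiv ℝ F (a, t)).comp (ContinuousLinearMap.inl ℝ E ℝ)) a :=
    (hF (a, t)).hasFDerivAt.comp a (hasFDerivAt_prodMk_left a t)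
  rw [h.fderiv]; rfl

/-- Slicing the derivative in the second (time) variable. -/
lemma hasDerivAt_slice {F : E × ℝ → G} (hF : Differentiable ℝ F) (a : E) (t : ℝ) :
    HasDerivAt (fun τ => F (a, τ)) (fderiv ℝ F (a, t) (0, 1)) t := by
  have h1 : HasDerivAt (fun τ : ℝ => ((a, τ) : E × ℝ)) ((0 : E), (1 : ℝ)) t :=
    (hasDerivAt_const t a).prodMk (hasDerivAt_id t)
  exact (hF (a, t)).hasFDerivAt.comp_hasDerivAt t h1

/-- Equality of mixed partial derivatives for a smooth function on `E × ℝ`. -/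
lemma mixed_partial {F : E × ℝ → G} (hF : ContDiff ℝ (⊤ : ℕ∞) F) (a : E) (t : ℝ) (v : E) :
    HasDerivAt (fun τ => fderiv ℝ (fun b => F (b, τ)) a v)
      (fderiv ℝ (fun b => fderiv ℝ F (b, t) ((0 : E), (1 : ℝ))) a v) t := by
  have hdF : Differentiable ℝ F := hF.differentiable (by simp)
  have hG1 : ContDiff ℝ 1 (fderiv ℝ F) := hF.fderiv_right (WithTop.coe_le_coe.mpr le_top)
  have hGd : Differentiable ℝ (fderiv ℝ F) := hG1.differentiable (by simp)
  have h1 : HasDerivAt (fun τ => fderiv ℝ F (a, τ)) (fderiv ℝ (fderiv ℝ F) (a, t) (0, 1)) t :=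
    hasDerivAt_slice hGd a t
  have h2 : HasDerivAt (fun τ => fderiv ℝ F (a, τ) (v, 0))
      (fderiv ℝ (fderiv ℝ F) (a, t) (0, 1) (v, 0)) t := by
    simpa using h1.clm_apply (hasDerivAt_const t ((v, 0) : E × ℝ))
  have hsym : IsSymmSndFDerivAt ℝ F (a, t) := hF.contDiffAt.isSymmSndFDerivAt (by simp [minSmoothness_of_isRCLikeNormedField]; exact WithTop.coe_le_coe.mpr (le_top : (2 : ℕ∞) ≤ ⊤))
  have e1 : fderiv ℝ (fderiv ℝ F) (a, t) (0, 1) (v, 0)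
      = fderiv ℝ (fderiv ℝ F) (a, t) (v, 0) (0, 1) := hsym.eq _ _
  have hP : ∀ p : E × ℝ, HasFDerivAt (fun q : E × ℝ => fderiv ℝ F q ((0 : E), (1 : ℝ)))
      ((ContinuousLinearMap.apply ℝ G ((0 : E), (1 : ℝ))).comp (fderiv ℝ (fderiv ℝ F) p)) p :=
    fun p => (ContinuousLinearMap.apply ℝ G ((0 : E), (1 : ℝ))).hasFDerivAt.comp p
      (hGd p).hasFDerivAt
  have e2 : fderiv ℝ (fun p : E × ℝ => fderiv ℝ F p ((0 : E), (1 : ℝ))) (a, t) (v, 0)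
      = fderiv ℝ (fderiv ℝ F) (a, t) (v, 0) (0, 1) := by
    rw [(hP (a, t)).fderiv]; rfl
  have e3 : fderiv ℝ (fun b => fderiv ℝ F (b, t) ((0 : E), (1 : ℝ))) a v
      = fderiv ℝ (fun p : E × ℝ => fderiv ℝ F p ((0 : E), (1 : ℝ))) (a, t) (v, 0) :=
    fderiv_slice (fun p => (hP p).differentiableAt) a t v
  have efun : (fun τ => fderiv ℝ (fun b => F (b, τ)) a v)
      = fun τ => fderiv ℝ F (a, τ) (v, 0) := funext fun τ => fderiv_slice hdF a τ v
  rw [efun, e3, e2, ← e1]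
  exact h2

/-- Evaluation of a vector-valued `fderiv` at a coordinate. -/
lemma fderiv_eval {h : E → (Fin 3 → ℝ)} {a : E} (hh : DifferentiableAt ℝ h a) (m : Fin 3)
    (v : E) : fderiv ℝ (fun b => h b m) a v = fderiv ℝ h a v m := by
  have h3 : HasFDerivAt (fun b => h b m)
      ((ContinuousLinearMap.proj (R := ℝ) (φ := fun _ : Fin 3 => ℝ) m).comp (fderiv ℝ h a)) a :=
    (ContinuousLinearMap.proj (R := ℝ) (φ := fun _ : Fin 3 => ℝ) m).hasFDerivAt.comp a
      hh.hasFDerivAt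
  rw [h3.fderiv]; rfl

/-- Chain rule, written componentwise. -/
lemma fderiv_comp_eval (g : (Fin 3 → ℝ) → ℝ) (h : (Fin 3 → ℝ) → (Fin 3 → ℝ))
    (hg : Differentiable ℝ g) (hh : Differentiable ℝ h) (a : Fin 3 → ℝ) (v : Fin 3 → ℝ) :
    fderiv ℝ (fun b => g (h b)) a v
      = ∑ m, fderiv ℝ g (h a) (Pi.single m 1) * fderiv ℝ (fun b => h b m) a v := by
  have hc : fderiv ℝ (fun b => g (h b)) a v = fderiv ℝ g (h a) (fderiv ℝ h a v) := by
    rw [show (fun b => g (h b)) = g ∘ h from rfl, fderiv_comp a (hg (h a)) (hh a)]; rfl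
  rw [hc]
  have hw : fderiv ℝ h a v
      = ∑ m, (fderiv ℝ h a v m) • (Pi.single m (1 : ℝ) : Fin 3 → ℝ) := by
    ext j
    simp [Pi.single_apply]
  conv_lhs => rw [hw]
  rw [map_sum]
  refine Finset.sum_congr rfl fun m _ => ?_
  rw [map_smul, fderiv_eval (hh a) m v]
  simp [mul_comm]

end Aux

/-! ### Algebraic lemmas about `eps` and the 3×3 determinant -/

/-- Explicit 3×3 determinant. -/
def det3 (M : Fin 3 → Fin 3 → ℝ) : ℝ :=
  M 0 0 * (M 1 1 * M 2 2 - M 1 2 * M 2 1)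
    - M 0 1 * (M 1 0 * M 2 2 - M 1 2 * M 2 0)
    + M 0 2 * (M 1 0 * M 2 1 - M 1 1 * M 2 0)

lemma cross_eps (v w : Fin 3 → ℝ) (q : Fin 3) :
    (crossProduct v) w q = ∑ r, ∑ s, eps q r s * (v r * w s) := by
  fin_cases q <;>
    norm_num [cross_apply, eps, Fin.sum_univ_three] <;> ring

set_option maxHeartbeats 1000000 in
lemma key_alg (M G : Fin 3 → Fin 3 → ℝ) (hdet : det3 M = 1) (i : Fin 3) :
    (∑ j, ∑ k, eps i j k * G k j)
      = ∑ j, M i j * ∑ k, ∑ r, ∑ s, eps j r s * ((∑ m, G k m * M m r) * M k s) := by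
  simp only [det3] at hdet
  have h3 : ∀ q : Fin 3, q = 0 ∨ q = 1 ∨ q = 2 := by decide
  obtain rfl | rfl | rfl := h3 i <;>
    norm_num [Fin.sum_univ_three, eps] <;>
    [linear_combination (G 1 2 - G 2 1) * hdet;
     linear_combination (G 2 0 - G 0 2) * hdet;
     linear_combination (G 0 1 - G 1 0) * hdet]

/-! ### Flow lemmas -/

section Flow

variable (x u : (Fin 3 → ℝ) → ℝ → (Fin 3 → ℝ))

/-- Time derivative of the Jacobian entries of the flow map. -/
lemma entry_hasDerivAt (hx : ContDiff ℝ (⊤ : ℕ∞) (Function.uncurry x))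
    (hu : ContDiff ℝ (⊤ : ℕ∞) (Function.uncurry u))
    (hflow : ∀ a t, deriv (fun τ => x a τ) t = u (x a t) t)
    (a : Fin 3 → ℝ) (t : ℝ) (i j : Fin 3) :
    HasDerivAt (fun τ => fderiv ℝ (fun b => x b τ i) a (Pi.single j 1))
      (∑ m, fderiv ℝ (fun z => u z t i) (x a t) (Pi.single m 1)
        * fderiv ℝ (fun b => x b t m) a (Pi.single j 1)) t := by
  have hxk : ∀ k : Fin 3, ContDiff ℝ (⊤ : ℕ∞) (fun p : (Fin 3 → ℝ) × ℝ => x p.1 p.2 k) :=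
    fun k => contDiff_pi.mp hx k
  have h := mixed_partial (hxk i) a t (Pi.single j 1)
  have hval : fderiv ℝ
      (fun b => fderiv ℝ (fun p : (Fin 3 → ℝ) × ℝ => x p.1 p.2 i) (b, t)
        ((0 : Fin 3 → ℝ), (1 : ℝ))) a (Pi.single j 1)
      = ∑ m, fderiv ℝ (fun z => u z t i) (x a t) (Pi.single m 1)
          * fderiv ℝ (fun b => x b t m) a (Pi.single j 1) := by
    have hinner : ∀ b : Fin 3 → ℝ,
        fderiv ℝ (fun p : (Fin 3 → ℝ) × ℝ => x p.1 p.2 i) (b, t) ((0 : Fin 3 → ℝ), (1 : ℝ))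
          = u (x b t) t i := by
      intro b
      have h1 : HasDerivAt (fun τ => x b τ i)
          (fderiv ℝ (fun p : (Fin 3 → ℝ) × ℝ => x p.1 p.2 i) (b, t)
            ((0 : Fin 3 → ℝ), (1 : ℝ))) t :=
        hasDerivAt_slice ((hxk i).differentiable (by simp)) b t
      have hd : DifferentiableAt ℝ (fun τ => x b τ) t :=
        ((hx.comp ((contDiff_const (c := b)).prodMk contDiff_id)).differentiable (by simp)) t
      have h3 : HasDerivAt (fun τ => x b τ) (u (x b t) t) t := hflow b t ▸ hd.hasDerivAt
      have h2 : HasDerivAt (fun τ => x b τ i) (u (x b t) t i) t :=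
        (ContinuousLinearMap.proj (R := ℝ) (φ := fun _ : Fin 3 => ℝ) i).hasFDerivAt.comp_hasDerivAt
          t h3
      exact h1.unique h2
    have hfe : (fun b => fderiv ℝ (fun p : (Fin 3 → ℝ) × ℝ => x p.1 p.2 i) (b, t)
        ((0 : Fin 3 → ℝ), (1 : ℝ))) = fun b => u (x b t) t i := funext hinner
    rw [hfe]
    have hg : Differentiable ℝ (fun z => u z t i) :=
      ((contDiff_pi.mp hu i).comp (contDiff_id.prodMk contDiff_const)).differentiable (by simp)
    have hh : Differentiable ℝ (fun b => x b t) :=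
      (hx.comp (contDiff_id.prodMk contDiff_const)).differentiable (by simp)
    exact fderiv_comp_eval (fun z => u z t i) (fun b => x b t) hg hh a (Pi.single j 1)
  exact hval ▸ h

/-- Liouville: the Jacobian determinant of the flow of a divergence-free field is `1`. -/
lemma det_jac_eq_one (hx : ContDiff ℝ (⊤ : ℕ∞) (Function.uncurry x))
    (hu : ContDiff ℝ (⊤ : ℕ∞) (Function.uncurry u))
    (hdiv : ∀ y t, ∑ i, fderiv ℝ (fun z => u z t i) y (Pi.single i 1) = 0)
    (hflow : ∀ a t, deriv (fun τ => x a τ) t = u (x a t) t)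
    (hinit : ∀ a, x a 0 = a) (a : Fin 3 → ℝ) (t : ℝ) :
    det3 (fun i j => fderiv ℝ (fun b => x b t i) a (Pi.single j 1)) = 1 := by
  set e : Fin 3 → Fin 3 → ℝ → ℝ :=
    fun i j τ => fderiv ℝ (fun b => x b τ i) a (Pi.single j 1) with he
  set g : Fin 3 → Fin 3 → ℝ → ℝ :=
    fun k m τ => fderiv ℝ (fun z => u z τ k) (x a τ) (Pi.single m 1) with hg
  have hE : ∀ (i j : Fin 3) (τ : ℝ), HasDerivAt (fun s => e i j s)
      (g i 0 τ * e 0 j τ + g i 1 τ * e 1 j τ + g i 2 τ * e 2 j τ) τ := by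
    intro i j τ
    have := entry_hasDerivAt x u hx hu hflow a τ i j
    simpa [he, hg, Fin.sum_univ_three] using this
  have hD : ∀ τ : ℝ, HasDerivAt (fun s => det3 (fun i j => e i j s)) 0 τ := by
    intro τ
    have H := (((hE 0 0 τ).mul (((hE 1 1 τ).mul (hE 2 2 τ)).sub
          ((hE 1 2 τ).mul (hE 2 1 τ)))).sub
        ((hE 0 1 τ).mul (((hE 1 0 τ).mul (hE 2 2 τ)).sub ((hE 1 2 τ).mul (hE 2 0 τ))))).add
      ((hE 0 2 τ).mul (((hE 1 0 τ).mul (hE 2 1 τ)).sub ((hE 1 1 τ).mul (hE 2 0 τ))))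
    have htr : g 0 0 τ + g 1 1 τ + g 2 2 τ = 0 := by
      have := hdiv (x a τ) τ
      simpa [hg, Fin.sum_univ_three] using this
    refine H.congr_deriv (Eq.symm ?_)
    simp only [Pi.mul_apply, Pi.sub_apply]
    linear_combination
        (-(e 0 0 τ * (e 1 1 τ * e 2 2 τ - e 1 2 τ * e 2 1 τ)
          - e 0 1 τ * (e 1 0 τ * e 2 2 τ - e 1 2 τ * e 2 0 τ)
          + e 0 2 τ * (e 1 0 τ * e 2 1 τ - e 1 1 τ * e 2 0 τ))) * htr
  have hconst : det3 (fun i j => e i j t) = det3 (fun i j => e i j 0) :=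
    is_const_of_deriv_eq_zero (fun τ => (hD τ).differentiableAt)
      (fun τ => (hD τ).deriv) t 0
  have he0 : ∀ i j : Fin 3, e i j 0 = (Pi.single j (1 : ℝ) : Fin 3 → ℝ) i := by
    intro i j
    have hfun : (fun b => x b 0 i) = fun b : Fin 3 → ℝ => b i :=
      funext fun b => by rw [hinit b]
    simp only [he]
    rw [hfun, show (fun b : Fin 3 → ℝ => b i)
        = ⇑(ContinuousLinearMap.proj (R := ℝ) (φ := fun _ : Fin 3 => ℝ) i) from rfl,
      ContinuousLinearMap.fderiv]
    rfl
  show det3 (fun i j => e i j t) = 1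
  rw [hconst]
  simp only [det3, he0]
  norm_num [Pi.single_apply, Fin.ext_iff]

end Flow

/-- Cauchy vorticity formula: if the Cauchy invariants relation
`Σ_k ∇ᴸẋ_k × ∇ᴸx_k = ω₀` holds for the volume-preserving flow of a
divergence-free `u`, then `ω(x(a,t),t) = Dₐx(a,t) · ω₀(a)`. -/
theorem cauchy_vorticity_formula
    (x u : (Fin 3 → ℝ) → ℝ → (Fin 3 → ℝ))
    (hx : ContDiff ℝ (⊤ : ℕ∞) (Function.uncurry x))
    (hu : ContDiff ℝ (⊤ : ℕ∞) (Function.uncurry u))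
    (hdiv : ∀ y t, ∑ i, fderiv ℝ (fun z => u z t i) y (Pi.single i 1) = 0)
    (hflow : ∀ a t, deriv (fun τ => x a τ) t = u (x a t) t)
    (hinit : ∀ a, x a 0 = a)
    (hcauchy : ∀ a t,
      (∑ k, crossProduct (grad (fun b => deriv (fun τ => x b τ) t k) a)
          (grad (fun b => x b t k) a))
        = curl (fun y => u y 0) a) :
    ∀ (a : Fin 3 → ℝ) (t : ℝ) (i : Fin 3),
      curl (fun y => u y t) (x a t) i
        = ∑ j, fderiv ℝ (fun b => x b t i) a (Pi.single j 1) *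
            curl (fun y => u y 0) a j := by
  intro a t i
  have hdet := det_jac_eq_one x u hx hu hdiv hflow hinit a t
  set M : Fin 3 → Fin 3 → ℝ :=
    fun p j => fderiv ℝ (fun b => x b t p) a (Pi.single j 1) with hM
  set Gm : Fin 3 → Fin 3 → ℝ :=
    fun k m => fderiv ℝ (fun z => u z t k) (x a t) (Pi.single m 1) with hGm
  have hcross : ∀ j : Fin 3, curl (fun y => u y 0) a j
      = ∑ k, ∑ r, ∑ s, eps j r s * ((∑ m, Gm k m * M m r) * M k s) := by
    intro j
    rw [← hcauchy a t, Finset.sum_apply]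
    refine Finset.sum_congr rfl fun k _ => ?_
    rw [cross_eps]
    refine Finset.sum_congr rfl fun r _ => Finset.sum_congr rfl fun s _ => ?_
    congr 1
    have hv : grad (fun b => deriv (fun τ => x b τ) t k) a r = ∑ m, Gm k m * M m r := by
      have hfun : (fun b => deriv (fun τ => x b τ) t k) = fun b => u (x b t) t k :=
        funext fun b => by rw [hflow b t]
      have hg : Differentiable ℝ (fun z => u z t k) :=
        ((contDiff_pi.mp hu k).comp (contDiff_id.prodMk contDiff_const)).differentiable (by simp)
      have hh : Differentiable ℝ (fun b => x b t) :=
        (hx.comp (contDiff_id.prodMk contDiff_const)).differentiable (by simp)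
      show fderiv ℝ (fun b => deriv (fun τ => x b τ) t k) a (Pi.single r 1) = _
      rw [hfun]
      exact fderiv_comp_eval (fun z => u z t k) (fun b => x b t) hg hh a (Pi.single r 1)
    rw [hv]
    rfl
  have lhs_eq : curl (fun y => u y t) (x a t) i = ∑ j, ∑ k, eps i j k * Gm k j := rfl
  rw [lhs_eq, key_alg M Gm hdet i]
  refine Finset.sum_congr rfl fun j _ => ?_
  rw [hcross j]
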